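/- Under Assumption 1, the transformed value function v satisfies the dynamic programming principle: for every x ∈ ℝⁿ and every integer k ≥ 1, v(x) = sup_π max{ 1 − (1 − v(φ_x^π(k))) / Π_{i=1}^{k} (g(φ_x^π(i−1)) + 1), max_{0 ≤ i ≤ k−1} [ 1 − min_{j=1,…,n_X} l(1 − h_j^X(φ_x^π(i))) / Π_{j₁=1}^{i} (g(φ_x^π(j₁−1)) + 1) ] }. -/

import Mathlib

open Metric Set Filter MeasureTheory

noncomputable section

abbrev St (n : ℕ) := EuclideanSpace ℝ (Fin n)

/-- Trajectory of the perturbed discrete-time system. -/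
def traj {n m : ℕ} (f : St n → St m → St n) (x₀ : St n) (π : ℕ → St m) : ℕ → St n
  | 0 => x₀
  | k + 1 => f (traj f x₀ π k) (π k)

/-- A perturbation input policy takes values in `D`. -/
def IsPolicy {m : ℕ} (D : Set (St m)) (π : ℕ → St m) : Prop := ∀ k, π k ∈ D

/-- Maximal robust region of attraction. -/
def RoA {n m : ℕ} (f : St n → St m → St n) (D : Set (St m)) (X : Set (St n)) : Set (St n) :=
  {x₀ | ∀ π, IsPolicy D π →
    (∀ k, traj f x₀ π k ∈ X) ∧ Tendsto (fun k => traj f x₀ π k) atTop (nhds 0)}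

/-- `f` is a polynomial map in `(x, d)`. -/
def IsPolyMap2 {n m : ℕ} (f : St n → St m → St n) : Prop :=
  ∃ p : Fin n → MvPolynomial (Fin n ⊕ Fin m) ℝ,
    ∀ x d i, f x d i = MvPolynomial.eval (Sum.elim x d) (p i)

/-- A real-valued polynomial function on the state space. -/
def IsPolyFun {n : ℕ} (g : St n → ℝ) : Prop :=
  ∃ p : MvPolynomial (Fin n) ℝ, ∀ x, g x = MvPolynomial.eval x p

/-- Assumption 1: uniform local exponential stability. -/
def Assumption1 {n m : ℕ} (f : St n → St m → St n) (D : Set (St m)) (X : Set (St n)) : Prop :=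
  ∃ M r lam : ℝ, 0 < M ∧ 0 < r ∧ 0 < lam ∧ lam < 1 ∧ closedBall (0 : St n) r ⊆ X ∧
    ∀ x₀ ∈ closedBall (0 : St n) r, ∀ π, IsPolicy D π →
      ∀ k, ‖traj f x₀ π k‖ ≤ lam ^ k * M * ‖x₀‖

/-- Maximal robust region of uniform attraction (with ball radius `ε`). -/
def R0 {n m : ℕ} (f : St n → St m → St n) (D : Set (St m)) (X : Set (St n)) (ε : ℝ) :
    Set (St n) :=
  {x₀ | (∃ δ > 0, ∀ π, IsPolicy D π → ∀ k, δ < infDist (traj f x₀ π k) Xᶜ) ∧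
        (∃ K : ℕ, ∀ π, IsPolicy D π →
            ∃ k, 0 < k ∧ k ≤ K ∧ traj f x₀ π k ∈ closedBall (0 : St n) ε)}

/-- Extended-real logarithm with the convention `ln 0 = -∞`. -/
def elog (t : ℝ) : EReal := if t = 0 then ⊥ else (Real.log t : EReal)

/-- The value function `V`. -/
def Vval {n m nX : ℕ} (f : St n → St m → St n) (D : Set (St m))
    (hX : Fin nX → St n → ℝ) (g : St n → ℝ) (x : St n) : EReal :=
  ⨆ π ∈ {π : ℕ → St m | IsPolicy D π}, ⨆ k : ℕ,
    ((∑ i ∈ Finset.range k, Real.log (g (traj f x π i) + 1) : ℝ) : EReal)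
      - ⨅ j : Fin nX, elog (max (1 - hX j (traj f x π k)) 0)

/-- The Kruzhkov transformed value function `v = 1 - e^{-V}` (with `e^{-∞} = 0`). -/
def vval {n m nX : ℕ} (f : St n → St m → St n) (D : Set (St m))
    (hX : Fin nX → St n → ℝ) (g : St n → ℝ) (x : St n) : ℝ :=
  if Vval f D hX g x = ⊤ then 1 else 1 - Real.exp (-(Vval f D hX g x).toReal)

/-- `w` is a (bounded continuous) solution of the Bellman equation. -/
def IsBellmanSolution {n m nX : ℕ} (f : St n → St m → St n) (D : Set (St m))
    (hX : Fin nX → St n → ℝ) (g : St n → ℝ) (w : St n → ℝ) : Prop :=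
  (∀ x, min (sInf {y : ℝ | ∃ d ∈ D, y = w x - w (f x d) - g x * (1 - w x)})
            (w x - 1 + ⨅ j : Fin nX, max (1 - hX j x) 0) = 0) ∧ w 0 = 0

/-!
The Kruzhkov transform `a ↦ 1 - e^{-a}` (with `e^{-∞} = 0`) is monotone on `(-∞, ∞]` and turns
suprema into suprema, so `v(x)` is the supremum over policies `π` and times `t` of the stage values
`1 - L(x_t) / ∏_{i<t} (g(x_i) + 1)`, where `L = min_j l(1 - h_j^X)`. For such a supremum the dynamic
programming principle is elementary: a stage value at a time `k + s` is the stage value of the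
policy shifted by `k`, seen from `x_k` and discounted by the product up to time `k`; conversely
every continuation from `x_k` is realised by splicing a second policy onto the first at time `k`.
-/

def kruzhkov (a : EReal) : ℝ := if a = ⊤ then 1 else 1 - Real.exp (-a.toReal)

@[simp] lemma kruzhkov_top : kruzhkov ⊤ = 1 := if_pos rfl

@[simp] lemma kruzhkov_bot : kruzhkov ⊥ = 0 := by simp [kruzhkov]

@[simp] lemma kruzhkov_coe (r : ℝ) : kruzhkov r = 1 - Real.exp (-r) := by simp [kruzhkov]

lemma kruzhkov_le_one (a : EReal) : kruzhkov a ≤ 1 := by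
  unfold kruzhkov
  split_ifs
  · rfl
  · linarith [Real.exp_pos (-a.toReal)]

lemma kruzhkov_mono {a b : EReal} (ha : a ≠ ⊥) (hab : a ≤ b) : kruzhkov a ≤ kruzhkov b := by
  induction b using EReal.rec with
  | bot => exact absurd (le_bot_iff.1 hab) ha
  | top => simpa using kruzhkov_le_one a
  | coe r =>
    lift a to ℝ using ⟨ne_top_of_le_ne_top (EReal.coe_ne_top r) hab, ha⟩
    have := Real.exp_le_exp.2 (neg_le_neg (EReal.coe_le_coe_iff.1 hab))
    rw [kruzhkov_coe, kruzhkov_coe]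
    linarith

lemma kruzhkov_le_iff {a : EReal} (ha : a ≠ ⊥) {s : ℝ} (hs : s < 1) :
    kruzhkov a ≤ s ↔ a ≤ ((-Real.log (1 - s) : ℝ) : EReal) := by
  induction a using EReal.rec with
  | bot => exact absurd rfl ha
  | top => simpa using hs
  | coe r =>
    rw [kruzhkov_coe, EReal.coe_le_coe_iff, le_neg, Real.log_le_iff_le_exp (by linarith)]
    constructor <;> intro h <;> linarith

/-- For empty `ι` both sides vanish: `kruzhkov ⊥ = 0`, and `⨆` of the empty family in `ℝ` is `0`. -/
lemma kruzhkov_iSup {ι : Type*} (c : ι → EReal) (hc : ∀ i, c i ≠ ⊥) :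
    kruzhkov (⨆ i, c i) = ⨆ i, kruzhkov (c i) := by
  rcases isEmpty_or_nonempty ι with hι | hι
  · simp
  have ⟨i₀⟩ := hι
  have hbdd : BddAbove (range fun i => kruzhkov (c i)) :=
    ⟨1, forall_mem_range.2 fun i => kruzhkov_le_one _⟩
  refine le_antisymm ?_ (ciSup_le fun i => kruzhkov_mono (hc i) (le_iSup c i))
  rcases lt_or_ge (⨆ i, kruzhkov (c i)) 1 with hs | hs
  · refine (kruzhkov_le_iff (ne_bot_of_le_ne_bot (hc i₀) (le_iSup c i₀)) hs).2 (iSup_le fun i => ?_)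
    exact (kruzhkov_le_iff (hc i) hs).1 (le_ciSup hbdd i)
  · exact (kruzhkov_le_one _).trans hs

lemma elog_le_elog {s t : ℝ} (hs : 0 ≤ s) (hst : s ≤ t) : elog s ≤ elog t := by
  unfold elog
  rcases hs.eq_or_lt with rfl | hs
  · rw [if_pos rfl]
    exact bot_le
  · rw [if_neg hs.ne', if_neg (hs.trans_le hst).ne']
    exact EReal.coe_le_coe_iff.2 (Real.log_le_log hs hst)

lemma iInf_elog {ι : Type*} [Finite ι] [Nonempty ι] {c : ι → ℝ} (hc : ∀ i, 0 ≤ c i) :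
    ⨅ i, elog (c i) = elog (⨅ i, c i) := by
  obtain ⟨i₀, hi₀⟩ := Finite.exists_min c
  rw [le_antisymm (ciInf_le (Finite.bddBelow_range c) i₀) (le_ciInf hi₀)]
  exact le_antisymm (iInf_le _ i₀) (le_iInf fun i => elog_le_elog (hc i₀) (hi₀ i))

lemma coe_sub_elog_ne_bot (S L : ℝ) : (S : EReal) - elog L ≠ ⊥ := by
  unfold elog
  split_ifs
  · simp
  · exact EReal.coe_ne_bot (S - Real.log L)

lemma kruzhkov_coe_sub_elog (S : ℝ) {L : ℝ} (hL : 0 ≤ L) :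
    kruzhkov (S - elog L) = 1 - L / Real.exp S := by
  rcases hL.eq_or_lt with rfl | hL
  · simp [elog]
  · rw [elog, if_neg hL.ne', ← EReal.coe_sub, kruzhkov_coe, neg_sub, Real.exp_sub,
      Real.exp_log hL]

lemma sSup_setOf_exists_eq {α : Type*} (p : α → Prop) (F : α → ℝ) :
    sSup {y | ∃ a, p a ∧ y = F a} = ⨆ a : {a // p a}, F a :=
  congrArg sSup <| Set.ext fun _ =>
    ⟨fun ⟨a, hpa, hy⟩ => ⟨⟨a, hpa⟩, hy.symm⟩, fun ⟨a, ha⟩ => ⟨a.1, a.2, ha.symm⟩⟩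

section

variable {n m nX : ℕ} (f : St n → St m → St n) (D : Set (St m)) (hX : Fin nX → St n → ℝ)
  (g : St n → ℝ)

def margin (y : St n) : ℝ := ⨅ j, max (1 - hX j y) 0

def discount (x : St n) (π : ℕ → St m) (t : ℕ) : ℝ :=
  ∏ i ∈ Finset.range t, (g (traj f x π i) + 1)

def stageValue (x : St n) (π : ℕ → St m) (t : ℕ) : ℝ :=
  1 - margin hX (traj f x π t) / discount f g x π t

def valueSup (x : St n) : ℝ := ⨆ q : {π // IsPolicy D π} × ℕ, stageValue f hX g x q.1.1 q.2

def splice (π σ : ℕ → St m) (k : ℕ) : ℕ → St m := fun i => if i < k then π i else σ (i - k)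

variable {f D hX g}

lemma traj_add (x : St n) (π : ℕ → St m) (k : ℕ) :
    ∀ s, traj f x π (k + s) = traj f (traj f x π k) (fun i => π (k + i)) s
  | 0 => rfl
  | s + 1 => by rw [← add_assoc, traj, traj, traj_add x π k s]

lemma traj_splice_of_le (x : St n) (π σ : ℕ → St m) {k : ℕ} :
    ∀ {i}, i ≤ k → traj f x (splice π σ k) i = traj f x π i
  | 0, _ => rfl
  | i + 1, h => by rw [traj, traj, traj_splice_of_le x π σ (by omega), splice, if_pos (by omega)]

lemma shift_splice (π σ : ℕ → St m) (k : ℕ) : (fun i => splice π σ k (k + i)) = σ := by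
  funext i
  simp [splice]

lemma IsPolicy.splice {π σ : ℕ → St m} (hπ : IsPolicy D π) (hσ : IsPolicy D σ) (k : ℕ) :
    IsPolicy D (splice π σ k) := fun i => by
  unfold _root_.splice
  split_ifs
  exacts [hπ i, hσ _]

lemma margin_nonneg (y : St n) : 0 ≤ margin hX y :=
  Real.iInf_nonneg fun _ => le_max_right _ _

lemma discount_pos (hg : ∀ x, 0 ≤ g x) (x : St n) (π : ℕ → St m) (t : ℕ) :
    0 < discount f g x π t :=
  Finset.prod_pos fun i _ => by linarith [hg (traj f x π i)]

lemma discount_add (x : St n) (π : ℕ → St m) (k s : ℕ) :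
    discount f g x π (k + s) =
      discount f g x π k * discount f g (traj f x π k) (fun i => π (k + i)) s := by
  simp only [discount, Finset.prod_range_add, traj_add]

lemma discount_splice (x : St n) (π σ : ℕ → St m) (k : ℕ) :
    discount f g x (splice π σ k) k = discount f g x π k :=
  Finset.prod_congr rfl fun i hi => by rw [traj_splice_of_le x π σ (Finset.mem_range.1 hi).le]

lemma exp_sum_log_eq_discount (hg : ∀ x, 0 ≤ g x) (x : St n) (π : ℕ → St m) (t : ℕ) :
    Real.exp (∑ i ∈ Finset.range t, Real.log (g (traj f x π i) + 1)) = discount f g x π t := by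
  rw [Real.exp_sum]
  exact Finset.prod_congr rfl fun i _ => Real.exp_log (by linarith [hg (traj f x π i)])

lemma Vval_eq_iSup (hnX : 0 < nX) (x : St n) :
    Vval f D hX g x = ⨆ q : {π // IsPolicy D π} × ℕ,
      ((∑ i ∈ Finset.range q.2, Real.log (g (traj f x q.1.1 i) + 1) : ℝ) : EReal) -
        elog (margin hX (traj f x q.1.1 q.2)) := by
  have : Nonempty (Fin nX) := ⟨⟨0, hnX⟩⟩
  simp only [Vval, margin, iInf_elog fun _ => le_max_right _ _]
  rw [iSup_prod, iSup_subtype']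
  rfl

theorem vval_eq_valueSup (hnX : 0 < nX) (hg : ∀ x, 0 ≤ g x) :
    vval f D hX g = valueSup f D hX g := by
  funext x
  change kruzhkov (Vval f D hX g x) = _
  rw [Vval_eq_iSup hnX, kruzhkov_iSup _ fun q => coe_sub_elog_ne_bot _ _]
  refine iSup_congr fun q => ?_
  rw [kruzhkov_coe_sub_elog _ (margin_nonneg _), exp_sum_log_eq_discount hg]
  rfl

lemma stageValue_le_one (hg : ∀ x, 0 ≤ g x) (x : St n) (π : ℕ → St m) (t : ℕ) :
    stageValue f hX g x π t ≤ 1 :=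
  sub_le_self _ (div_nonneg (margin_nonneg _) (discount_pos hg x π t).le)

lemma stageValue_add (x : St n) (π : ℕ → St m) (k s : ℕ) :
    stageValue f hX g x π (k + s) =
      1 - (1 - stageValue f hX g (traj f x π k) (fun i => π (k + i)) s) / discount f g x π k := by
  rw [stageValue, stageValue, discount_add, traj_add, sub_sub_cancel, div_div, mul_comm]

lemma stageValue_splice (x : St n) (π σ : ℕ → St m) (k s : ℕ) :
    stageValue f hX g x (splice π σ k) (k + s) =
      1 - (1 - stageValue f hX g (traj f x π k) σ s) / discount f g x π k := by
  rw [stageValue_add, shift_splice, traj_splice_of_le x π σ le_rfl, discount_splice]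

lemma bddAbove_range_stageValue (hg : ∀ x, 0 ≤ g x) (x : St n) :
    BddAbove (range fun q : {π // IsPolicy D π} × ℕ => stageValue f hX g x q.1.1 q.2) := by
  refine ⟨1, ?_⟩
  rintro _ ⟨q, rfl⟩
  exact stageValue_le_one hg x q.1.1 q.2

lemma stageValue_le_valueSup (hg : ∀ x, 0 ≤ g x) {x : St n} {π : ℕ → St m}
    (hπ : IsPolicy D π) (t : ℕ) : stageValue f hX g x π t ≤ valueSup f D hX g x :=
  le_ciSup (bddAbove_range_stageValue hg x) (⟨π, hπ⟩, t)

lemma one_sub_div_discount_le_valueSup (hg : ∀ x, 0 ≤ g x) {x : St n} {π : ℕ → St m}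
    (hπ : IsPolicy D π) (k : ℕ) :
    1 - (1 - valueSup f D hX g (traj f x π k)) / discount f g x π k ≤ valueSup f D hX g x := by
  have hP := discount_pos (f := f) hg x π k
  suffices valueSup f D hX g (traj f x π k) ≤ 1 - discount f g x π k * (1 - valueSup f D hX g x) by
    rw [sub_le_comm, le_div_iff₀ hP]
    linarith
  have : Nonempty {π // IsPolicy D π} := ⟨⟨π, hπ⟩⟩
  refine ciSup_le fun ⟨⟨σ, hσ⟩, t⟩ => ?_
  have h := stageValue_le_valueSup (f := f) (hX := hX) (x := x) hg (hπ.splice hσ k) (k + t)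
  rw [stageValue_splice, sub_le_comm, le_div_iff₀ hP] at h
  linarith

lemma stageValue_le_max (hg : ∀ x, 0 ≤ g x) {x : St n} {π : ℕ → St m} (hπ : IsPolicy D π)
    (k t : ℕ) :
    stageValue f hX g x π t ≤
      max (1 - (1 - valueSup f D hX g (traj f x π k)) / discount f g x π k)
        (⨆ i : Fin k, stageValue f hX g x π i) := by
  rcases lt_or_ge t k with ht | ht
  · exact le_max_of_le_right (le_ciSup (f := fun i : Fin k => stageValue f hX g x π i)
      (Finite.bddAbove_range _) ⟨t, ht⟩)
  · obtain ⟨s, rfl⟩ := Nat.exists_eq_add_of_le ht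
    refine le_max_of_le_left ?_
    have := discount_pos (f := f) hg x π k
    rw [stageValue_add]
    gcongr
    exact stageValue_le_valueSup hg (fun i => hπ (k + i)) s

lemma max_le_valueSup (hg : ∀ x, 0 ≤ g x) {x : St n} {π : ℕ → St m} (hπ : IsPolicy D π)
    {k : ℕ} (hk : 1 ≤ k) :
    max (1 - (1 - valueSup f D hX g (traj f x π k)) / discount f g x π k)
      (⨆ i : Fin k, stageValue f hX g x π i) ≤ valueSup f D hX g x := by
  have : Nonempty (Fin k) := ⟨⟨0, hk⟩⟩
  exact max_le (one_sub_div_discount_le_valueSup hg hπ k)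
    (ciSup_le fun i => stageValue_le_valueSup hg hπ i)

theorem valueSup_eq_iSup_max (hg : ∀ x, 0 ≤ g x) {k : ℕ} (hk : 1 ≤ k) (x : St n) :
    valueSup f D hX g x = ⨆ p : {π // IsPolicy D π},
      max (1 - (1 - valueSup f D hX g (traj f x p.1 k)) / discount f g x p.1 k)
        (⨆ i : Fin k, stageValue f hX g x p.1 i) := by
  rcases isEmpty_or_nonempty {π // IsPolicy D π} with hD | hD
  · simp [valueSup]
  refine le_antisymm (ciSup_le fun ⟨p, t⟩ => (stageValue_le_max hg p.2 k t).trans ?_)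
    (ciSup_le fun p => max_le_valueSup hg p.2 hk)
  exact le_ciSup ⟨valueSup f D hX g x, forall_mem_range.2 fun p => max_le_valueSup hg p.2 hk⟩ p

end

theorem stmt16_general
    {n m nX : ℕ} (hnX : 0 < nX)
    (f : St n → St m → St n)
    (D : Set (St m))
    (hX : Fin nX → St n → ℝ)
    (g : St n → ℝ) (hgnn : ∀ x, 0 ≤ g x)
    :
    ∀ x : St n, ∀ k : ℕ, 1 ≤ k →
      vval f D hX g x =
        sSup {y : ℝ | ∃ π, IsPolicy D π ∧ y =
          max (1 - (1 - vval f D hX g (traj f x π k)) /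
                ∏ i ∈ Finset.range k, (g (traj f x π i) + 1))
              (⨆ i : Fin k, (1 - (⨅ j : Fin nX, max (1 - hX j (traj f x π (i : ℕ))) 0) /
                ∏ j1 ∈ Finset.range (i : ℕ), (g (traj f x π j1) + 1)))} := by
  intro x k hk
  rw [vval_eq_valueSup hnX hgnn, valueSup_eq_iSup_max hgnn hk, sSup_setOf_exists_eq]
  rfl

theorem stmt16
    {n m nX : ℕ} (hnX : 0 < nX)
    (f : St n → St m → St n) (hfpoly : IsPolyMap2 f)
    (D : Set (St m)) (hD : IsCompact D)
    (hf0 : ∀ d ∈ D, f 0 d = 0)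
    (hX : Fin nX → St n → ℝ) (hXpoly : ∀ j, IsPolyFun (hX j))
    (hX0 : ∀ j, hX j 0 = 0) (hXpos : ∀ j, ∀ x : St n, x ≠ 0 → 0 < hX j x)
    (X : Set (St n)) (hXdef : X = {x | ∀ j, hX j x < 1})
    (hXbdd : Bornology.IsBounded X) (hXopen : IsOpen X)
    (hA1 : Assumption1 f D X)
    (g : St n → ℝ) (hgpoly : IsPolyFun g) (hgnn : ∀ x, 0 ≤ g x)
    (hgzero : ∀ x : St n, g x = 0 ↔ x = 0)
    :
    ∀ x : St n, ∀ k : ℕ, 1 ≤ k →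
      vval f D hX g x =
        sSup {y : ℝ | ∃ π, IsPolicy D π ∧ y =
          max (1 - (1 - vval f D hX g (traj f x π k)) /
                ∏ i ∈ Finset.range k, (g (traj f x π i) + 1))
              (⨆ i : Fin k, (1 - (⨅ j : Fin nX, max (1 - hX j (traj f x π (i : ℕ))) 0) /
                ∏ j1 ∈ Finset.range (i : ℕ), (g (traj f x π j1) + 1)))} :=
  stmt16_general hnX f D hX g hgnn
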